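/- arXiv:1701.01263 — 3 statements merged into one kernel-verified Lean document; each statement's English description precedes it below -/
import Mathlib

section
/- For points R(a,b), R(c,d) of the projective line over a finite ring R with Jacobson radical J, R(a,b) Δ R(c,d) holds if and only if (R/J)(ā,b̄) Δ_J (R/J)(c̄,d̄) holds in the projective line over R/J. -/
open Matrix

/-- The cyclic left submodule `R(a,b)` of `R²`. -/
def ptSub (R : Type*) [Ring R] (a b : R) : Submodule R (Fin 2 → R) :=
  Submodule.span R {![a, b]}

/-- The right action of an invertible matrix `g` on submodules of `R²`, via `v ↦ v ᵥ* g`. -/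
def mulGL (R : Type*) [Ring R] (g : (Matrix (Fin 2) (Fin 2) R)ˣ)
    (p : Submodule R (Fin 2 → R)) : Submodule R (Fin 2 → R) :=
  p.map (Matrix.vecMulLinear g.val)

/-- The projective line over `R`: the orbit of `R(1,0)` under `GL₂(R)`. -/
def projLine (R : Type*) [Ring R] : Set (Submodule R (Fin 2 → R)) :=
  {p | ∃ g, mulGL R g (ptSub R 1 0) = p}

/-- The distant relation: the orbit of the pair `(R(1,0), R(0,1))` under `GL₂(R)`. -/
def IsDistant (R : Type*) [Ring R] (p q : Submodule R (Fin 2 → R)) : Prop :=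
  ∃ g, mulGL R g (ptSub R 1 0) = p ∧ mulGL R g (ptSub R 0 1) = q


section Aux

variable {R : Type*} [Ring R]

private lemma finUnit {M : Type*} [Monoid M] [Finite M] {a b : M} (h : a * b = 1) : IsUnit a := by
  have hsurj : Function.Surjective (a * ·) := fun x =>
    ⟨b * x, by show a * (b * x) = x; rw [← mul_assoc, h, one_mul]⟩
  have hinj : Function.Injective (a * ·) := Finite.injective_iff_surjective.mpr hsurj
  have hba : b * a = 1 := hinj (show a * (b * a) = a * 1 by rw [← mul_assoc, h, one_mul, mul_one])
  exact ⟨⟨a, b, h, hba⟩, rfl⟩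

private lemma isUnit_lower (x : R) : IsUnit (Matrix.of ![![(1:R),0],![x,1]]) := by
  refine ⟨⟨_, Matrix.of ![![(1:R),0],![-x,1]], ?_, ?_⟩, rfl⟩ <;>
  · ext i j
    fin_cases i <;> fin_cases j <;>
      simp [Matrix.mul_apply, Fin.sum_univ_two, Matrix.one_apply]

private lemma isUnit_upper (x : R) : IsUnit (Matrix.of ![![(1:R),x],![0,1]]) := by
  refine ⟨⟨_, Matrix.of ![![(1:R),-x],![0,1]], ?_, ?_⟩, rfl⟩ <;>
  · ext i j
    fin_cases i <;> fin_cases j <;>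
      simp [Matrix.mul_apply, Fin.sum_univ_two, Matrix.one_apply]

private lemma isUnit_diag (u v : Rˣ) : IsUnit (Matrix.of ![![(u:R),0],![0,(v:R)]]) := by
  refine ⟨⟨_, Matrix.of ![![((u⁻¹:Rˣ):R),0],![0,((v⁻¹:Rˣ):R)]], ?_, ?_⟩, rfl⟩ <;>
  · ext i j
    fin_cases i <;> fin_cases j <;>
      simp [Matrix.mul_apply, Fin.sum_univ_two, Matrix.one_apply]

private lemma mulGL_e1 (g : (Matrix (Fin 2) (Fin 2) R)ˣ) :
    mulGL R g (ptSub R 1 0) = Submodule.span R {g.val 0} := by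
  unfold mulGL ptSub
  rw [Submodule.map_span, Set.image_singleton]
  congr 1
  congr 1
  funext j
  simp [Matrix.vecMulLinear_apply, Matrix.vecMul, dotProduct, Fin.sum_univ_two]

private lemma mulGL_e2 (g : (Matrix (Fin 2) (Fin 2) R)ˣ) :
    mulGL R g (ptSub R 0 1) = Submodule.span R {g.val 1} := by
  unfold mulGL ptSub
  rw [Submodule.map_span, Set.image_singleton]
  congr 1
  congr 1
  funext j
  simp [Matrix.vecMulLinear_apply, Matrix.vecMul, dotProduct, Fin.sum_univ_two]

private lemma exists_unit_smul [Fintype R] {v w : Fin 2 → R}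
    (hspan : Submodule.span R {v} = Submodule.span R {w})
    (hw : ∃ x : Fin 2 → R, w 0 * x 0 + w 1 * x 1 = 1) :
    ∃ s : Rˣ, v = (s : R) • w := by
  have hw_mem : w ∈ Submodule.span R {v} := hspan ▸ Submodule.mem_span_singleton_self w
  obtain ⟨s, hs⟩ := Submodule.mem_span_singleton.mp hw_mem
  obtain ⟨x, hx⟩ := hw
  have h0 : w 0 = s * v 0 := by rw [← hs]; rfl
  have h1 : w 1 = s * v 1 := by rw [← hs]; rfl
  have hs1 : s * (v 0 * x 0 + v 1 * x 1) = 1 := by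
    rw [← hx, h0, h1, mul_add, mul_assoc, mul_assoc]
  obtain ⟨u, hu⟩ := finUnit hs1
  refine ⟨u⁻¹, ?_⟩
  funext i
  have hwi : w i = s * v i := by rw [← hs]; rfl
  show v i = ↑u⁻¹ * w i
  rw [hwi, ← hu, ← mul_assoc, Units.inv_mul, one_mul]

private lemma pj_distant_iff_isUnit [Fintype R] (a b c d : R) :
    IsDistant R (ptSub R a b) (ptSub R c d) ↔ IsUnit (Matrix.of ![![a,b],![c,d]]) := by
  constructor
  · rintro ⟨g, h1, h2⟩
    rw [mulGL_e1] at h1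
    rw [mulGL_e2] at h2
    have hrow : ∀ i : Fin 2, ∃ x : Fin 2 → R, g.val i 0 * x 0 + g.val i 1 * x 1 = 1 := by
      intro i
      refine ⟨fun j => (Units.val g⁻¹) j i, ?_⟩
      have h : (g.val * (Units.val g⁻¹)) i i = 1 := by
        rw [g.mul_inv]; simp [Matrix.one_apply]
      rw [Matrix.mul_apply, Fin.sum_univ_two] at h
      exact h
    obtain ⟨s, hs⟩ := exists_unit_smul (v := ![a,b]) (w := g.val 0) h1.symm (hrow 0)
    obtain ⟨t, ht⟩ := exists_unit_smul (v := ![c,d]) (w := g.val 1) h2.symm (hrow 1)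
    have ha : a = (s:R) * g.val 0 0 := congrFun hs 0
    have hb : b = (s:R) * g.val 0 1 := congrFun hs 1
    have hc : c = (t:R) * g.val 1 0 := congrFun ht 0
    have hd : d = (t:R) * g.val 1 1 := congrFun ht 1
    have hdec : Matrix.of ![![a,b],![c,d]] = Matrix.of ![![(s:R),0],![0,(t:R)]] * g.val := by
      ext i j
      fin_cases i <;> fin_cases j <;>
        simp [Matrix.mul_apply, Fin.sum_univ_two, ha, hb, hc, hd]
    rw [hdec]
    exact (isUnit_diag s t).mul g.isUnit
  · rintro ⟨u, hu⟩
    refine ⟨u, ?_, ?_⟩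
    · rw [mulGL_e1, hu]
      congr 1
    · rw [mulGL_e2, hu]
      congr 1

private lemma pj_isUnit_one_sub_mat {S : Type*} [Ring S] (π : R →+* S)
    (hker : ∀ a : R, π a = 0 ↔ ∀ y : R, IsUnit (1 - y * a))
    (K : Matrix (Fin 2) (Fin 2) R) (hK : ∀ i j, π (K i j) = 0) :
    IsUnit ((1 : Matrix (Fin 2) (Fin 2) R) - K) := by
  have hp : IsUnit (1 - K 0 0) := by simpa using (hker _).mp (hK 0 0) 1
  obtain ⟨u, hu⟩ := hp
  have ha' : π (K 1 1 + K 1 0 * ↑u⁻¹ * K 0 1) = 0 := by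
    simp [hK]
  have ht : IsUnit (1 - (K 1 1 + K 1 0 * ↑u⁻¹ * K 0 1)) := by simpa using (hker _).mp ha' 1
  obtain ⟨v, hv⟩ := ht
  have hdec : (1 : Matrix (Fin 2) (Fin 2) R) - K =
      Matrix.of ![![(1:R),0],![-(K 1 0) * ↑u⁻¹,1]] *
      (Matrix.of ![![(u:R),0],![0,(v:R)]] *
       Matrix.of ![![(1:R), ↑u⁻¹ * (-(K 0 1))],![0,1]]) := by
    ext i j
    fin_cases i <;> fin_cases j <;>
      simp [Matrix.mul_apply, Fin.sum_univ_two, Matrix.one_apply,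
        Units.inv_mul_cancel_right, Units.mul_inv_cancel_left] <;>
      noncomm_ring [hu, hv]
  rw [hdec]
  exact (isUnit_lower _).mul ((isUnit_diag u v).mul (isUnit_upper _))

private lemma pj_isUnit_map_iff {S : Type*} [Ring S] [Fintype R] (π : R →+* S)
    (hsurj : Function.Surjective π)
    (hker : ∀ a : R, π a = 0 ↔ ∀ y : R, IsUnit (1 - y * a))
    (M : Matrix (Fin 2) (Fin 2) R) :
    IsUnit M ↔ IsUnit (M.map π) := by
  constructor
  · intro h
    have := h.map (RingHom.mapMatrix π)
    simpa [RingHom.mapMatrix_apply] using this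
  · rintro ⟨w, hw⟩
    set N : Matrix (Fin 2) (Fin 2) R := fun i j => (hsurj ((Units.val w⁻¹) i j)).choose with hN
    have hNmap : N.map π = (Units.val w⁻¹) := by
      ext i j
      exact (hsurj _).choose_spec
    have hMN : (M * N).map π = 1 := by
      rw [Matrix.map_mul (f := π), ← hw, hNmap, w.mul_inv]
    set K : Matrix (Fin 2) (Fin 2) R := 1 - M * N with hKdef
    have hK : ∀ i j, π (K i j) = 0 := by
      intro i j
      have h1 : π ((M * N) i j) = (1 : Matrix (Fin 2) (Fin 2) S) i j := by
        rw [← hMN]; rfl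
      have : K i j = (1 : Matrix (Fin 2) (Fin 2) R) i j - (M * N) i j := rfl
      rw [this, map_sub, h1]
      by_cases hij : i = j <;> simp [Matrix.one_apply, hij]
    have hMNunit : IsUnit (M * N) := by
      have := pj_isUnit_one_sub_mat π hker K hK
      simpa [hKdef] using this
    obtain ⟨z, hz⟩ := hMNunit
    have : M * (N * Units.val z⁻¹) = 1 := by
      rw [← mul_assoc, ← hz]
      exact z.mul_inv
    exact finUnit this

end Aux

/-- With `π : R → R/J` the canonical surjection onto the quotient by the
Jacobson radical, points `R(a,b)`, `R(c,d)` of `P(R)` are distant iff their images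
`(R/J)(ā,b̄)`, `(R/J)(c̄,d̄)` are distant in `P(R/J)`. -/
theorem distant_iff_distant_mod_jacobson {R S : Type*} [Ring R] [Ring S] [Fintype R] [Fintype S]
    (π : R →+* S) (hsurj : Function.Surjective π)
    (hker : ∀ a : R, π a = 0 ↔ ∀ y : R, IsUnit (1 - y * a)) (a b c d : R)
    (hab : ptSub R a b ∈ projLine R) (hcd : ptSub R c d ∈ projLine R) :
    IsDistant R (ptSub R a b) (ptSub R c d) ↔
      IsDistant S (ptSub S (π a) (π b)) (ptSub S (π c) (π d)) := by
  have hmat : Matrix.of ![![π a, π b],![π c, π d]] = (Matrix.of ![![a,b],![c,d]]).map π := by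
    ext i j
    fin_cases i <;> fin_cases j <;> simp
  rw [pj_distant_iff_isUnit, pj_distant_iff_isUnit, hmat]
  exact pj_isUnit_map_iff π hsurj hker _
end

section
/- For the ring Mₙ(F_q) of n×n matrices over the finite field F_q, there is a bijection between the projective line P(Mₙ(F_q)) and the Grassmannian of n-dimensional subspaces of a 2n-dimensional F_q-vector space, under which the distant relation corresponds to the complementarity of subspaces: X Δ Y iff X ⊕ Y = V(2n,q). -/
open Matrix

/-- The row space in `F^n × F^n ≅ F^{2n}` of the `n × 2n` block matrix `[A|B]`. -/
def rowSpace {F : Type*} [Field F] {n : ℕ} (A B : Matrix (Fin n) (Fin n) F) :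
    Submodule F ((Fin n → F) × (Fin n → F)) :=
  Submodule.span F (Set.range fun i : Fin n => (A i, B i))

/-!
A point `R(a,b)` is sent to the row space of `[a|b]`, the range of `v ↦ (v ᵥ* a, v ᵥ* b)`.
Through `M₂(Mₙ(F)) ≃ M₂ₙ(F)`, a block matrix `[[a,b],[c,d]]` is invertible iff right
multiplication by it on `Fⁿ × Fⁿ` is bijective, i.e. iff `v ↦ (v ᵥ* a, v ᵥ* b)` and
`v ↦ (v ᵥ* c, v ᵥ* d)` are injective with complementary ranges. Hence the points of the
projective line are the `R(a,b)` with `[a|b]` of rank `n`, every `n`-dimensional subspace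
occurs (choose a complement of it to fill the second block row), and two points are distant
iff their row spaces are complementary. The map is well defined and injective because
`R(c,d) ≤ R(a,b)` and `rowSpace c d ≤ rowSpace a b` both say that `(c,d) = x (a,b)` for
some `x`.
-/

theorem LinearMap.bijective_coprod_iff {R M N P : Type*} [Ring R] [AddCommGroup M]
    [AddCommGroup N] [AddCommGroup P] [Module R M] [Module R N] [Module R P]
    {f : M →ₗ[R] P} {g : N →ₗ[R] P} :
    Function.Bijective (f.coprod g) ↔
      Function.Injective f ∧ Function.Injective g ∧ IsCompl (range f) (range g) := by
  refine ⟨fun ⟨hinj, hsurj⟩ => ⟨?_, ?_, ?_, ?_⟩, fun ⟨hf, hg, hfg⟩ => ⟨?_, ?_⟩⟩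
  · rw [← coprod_inl f g, coe_comp]
    exact hinj.comp inl_injective
  · rw [← coprod_inr f g, coe_comp]
    exact hinj.comp inr_injective
  · rw [Submodule.disjoint_def]
    rintro _ ⟨x, rfl⟩ ⟨y, hy⟩
    have : f.coprod g (x, -y) = f.coprod g 0 := by
      rw [coprod_apply, map_neg, hy, add_neg_cancel, map_zero]
    rw [show x = 0 from congrArg Prod.fst (hinj this), map_zero]
  · rw [codisjoint_iff, ← range_coprod, range_eq_top.mpr hsurj]
  · rw [← ker_eq_bot, ker_coprod_of_disjoint_range f g hfg.disjoint, ker_eq_bot.mpr hf,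
      ker_eq_bot.mpr hg, Submodule.prod_bot]
  · rw [← range_eq_top, range_coprod, ← codisjoint_iff]
    exact hfg.codisjoint

section

variable {R : Type*} [Ring R]

theorem ptSub_le_ptSub_iff {a b c d : R} :
    ptSub R c d ≤ ptSub R a b ↔ ∃ x, x * a = c ∧ x * b = d := by
  simp [ptSub, Submodule.span_singleton_le_iff_mem, Submodule.mem_span_singleton, funext_iff,
    Fin.forall_fin_two]

theorem mulGL_ptSub_one_zero (g : (Matrix (Fin 2) (Fin 2) R)ˣ) :
    mulGL R g (ptSub R 1 0) = ptSub R (g.1 0 0) (g.1 0 1) := by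
  rw [mulGL, ptSub, Submodule.map_span, Set.image_singleton, vecMulLinear_apply, ptSub]
  congr 2
  ext j
  fin_cases j <;> simp [vecMul, vecHead, vecTail]

theorem mulGL_ptSub_zero_one (g : (Matrix (Fin 2) (Fin 2) R)ˣ) :
    mulGL R g (ptSub R 0 1) = ptSub R (g.1 1 0) (g.1 1 1) := by
  rw [mulGL, ptSub, Submodule.map_span, Set.image_singleton, vecMulLinear_apply, ptSub]
  congr 2
  ext j
  fin_cases j <;> simp [vecMul, vecHead, vecTail]

theorem mem_projLine_iff {p : Submodule R (Fin 2 → R)} :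
    p ∈ projLine R ↔ ∃ g : (Matrix (Fin 2) (Fin 2) R)ˣ, ptSub R (g.1 0 0) (g.1 0 1) = p := by
  simp only [projLine, Set.mem_ofPred_eq, mulGL_ptSub_one_zero]

theorem isDistant_iff {p q : Submodule R (Fin 2 → R)} :
    IsDistant R p q ↔ ∃ g : (Matrix (Fin 2) (Fin 2) R)ˣ,
      ptSub R (g.1 0 0) (g.1 0 1) = p ∧ ptSub R (g.1 1 0) (g.1 1 1) = q := by
  simp only [IsDistant, mulGL_ptSub_one_zero, mulGL_ptSub_zero_one]

theorem IsDistant.mem_projLine_left {p q : Submodule R (Fin 2 → R)} (h : IsDistant R p q) :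
    p ∈ projLine R :=
  let ⟨g, hp, _⟩ := h
  ⟨g, hp⟩

end

section

variable {F : Type*} [Field F] {n : ℕ}

local notation "Mₙ" => Matrix (Fin n) (Fin n) F

def rowMap (a b : Mₙ) :
    (Fin n → F) →ₗ[F] (Fin n → F) × (Fin n → F) :=
  a.vecMulLinear.prod b.vecMulLinear

@[simp]
theorem rowMap_apply (a b : Mₙ) (v : Fin n → F) :
    rowMap a b v = (v ᵥ* a, v ᵥ* b) := rfl

theorem range_rowMap (a b : Mₙ) :
    LinearMap.range (rowMap a b) = rowSpace a b := by
  rw [LinearMap.range_eq_map, ← (Pi.basisFun F (Fin n)).span_eq, Submodule.map_span,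
    ← Set.range_comp, rowSpace]
  congr 2
  ext i <;> simp

def blockVecMul (g : Matrix (Fin 2) (Fin 2) (Mₙ)) :
    (Fin n → F) × (Fin n → F) →ₗ[F] (Fin n → F) × (Fin n → F) :=
  (rowMap (g 0 0) (g 0 1)).coprod (rowMap (g 1 0) (g 1 1))

theorem isUnit_iff_bijective_blockVecMul (g : Matrix (Fin 2) (Fin 2) (Mₙ)) :
    IsUnit g ↔ Function.Bijective (blockVecMul g) := by
  let e := (LinearEquiv.curry F F (Fin 2) (Fin n)).trans
    (LinearEquiv.piFinTwo F fun _ => Fin n → F)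
  have hconj : ⇑(blockVecMul g) ∘ e = e ∘ (· ᵥ* Matrix.comp _ _ _ _ _ g) := by
    funext v
    ext l <;>
      simp [e, blockVecMul, vecMul, dotProduct, Fintype.sum_prod_type, Fin.sum_univ_two]
  rw [← EquivLike.bijective_comp e, hconj, EquivLike.comp_bijective, ← isUnit_comp_iff]
  exact ⟨fun h => ⟨vecMul_injective_iff_isUnit.mpr h, vecMul_surjective_iff_isUnit.mpr h⟩,
    fun h => vecMul_injective_iff_isUnit.mp h.1⟩

theorem isUnit_iff_isCompl_rowSpace (g : Matrix (Fin 2) (Fin 2) (Mₙ)) :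
    IsUnit g ↔ Function.Injective (rowMap (g 0 0) (g 0 1)) ∧
      Function.Injective (rowMap (g 1 0) (g 1 1)) ∧
      IsCompl (rowSpace (g 0 0) (g 0 1)) (rowSpace (g 1 0) (g 1 1)) := by
  rw [isUnit_iff_bijective_blockVecMul, blockVecMul, LinearMap.bijective_coprod_iff,
    range_rowMap, range_rowMap]

theorem finrank_rowSpace {a b : Mₙ} (h : Function.Injective (rowMap a b)) :
    Module.finrank F (rowSpace a b) = n := by
  rw [← range_rowMap, LinearMap.finrank_range_of_inj h, Module.finrank_fin_fun]

theorem exists_rowMap_eq (f : (Fin n → F) →ₗ[F] (Fin n → F) × (Fin n → F)) :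
    ∃ a b, rowMap a b = f := by
  refine ⟨.of fun i => (f (Pi.single i 1)).1, .of fun i => (f (Pi.single i 1)).2, ?_⟩
  refine LinearMap.pi_ext' fun i => LinearMap.ext_ring ?_
  simp

theorem exists_rowSpace_eq {W : Submodule F ((Fin n → F) × (Fin n → F))}
    (hW : Module.finrank F W = n) :
    ∃ a b, Function.Injective (rowMap a b) ∧ rowSpace a b = W := by
  let e := LinearEquiv.ofFinrankEq (Fin n → F) W (by rw [Module.finrank_fin_fun, hW])
  obtain ⟨a, b, hab⟩ := exists_rowMap_eq (W.subtype ∘ₗ e.toLinearMap)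
  refine ⟨a, b, ?_, ?_⟩
  · rw [hab, LinearMap.coe_comp]
    exact W.injective_subtype.comp e.injective
  · rw [← range_rowMap, hab, LinearMap.range_comp_of_range_eq_top _ e.range,
      Submodule.range_subtype]

theorem rowSpace_le_rowSpace_iff {a b c d : Mₙ} :
    rowSpace c d ≤ rowSpace a b ↔ ∃ x, x * a = c ∧ x * b = d := by
  rw [rowSpace, Submodule.span_le, Set.range_subset_iff, ← range_rowMap]
  constructor
  · intro h
    choose x hx using h
    exact ⟨.of x, funext fun i => congrArg Prod.fst (hx i),
      funext fun i => congrArg Prod.snd (hx i)⟩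
  · rintro ⟨x, rfl, rfl⟩ i
    exact ⟨x i, rfl⟩

theorem ptSub_eq_ptSub_iff {a b c d : Mₙ} :
    ptSub Mₙ c d = ptSub Mₙ a b ↔ rowSpace c d = rowSpace a b := by
  simp only [le_antisymm_iff, ptSub_le_ptSub_iff, rowSpace_le_rowSpace_iff]

def toRowSpace (p : Submodule Mₙ (Fin 2 → Mₙ)) : Submodule F ((Fin n → F) × (Fin n → F)) :=
  Submodule.span F {x | ∃ m ∈ p, ∃ i, x = (m 0 i, m 1 i)}

theorem toRowSpace_ptSub (a b : Mₙ) : toRowSpace (ptSub Mₙ a b) = rowSpace a b := by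
  refine le_antisymm (Submodule.span_le.mpr ?_) (Submodule.span_mono ?_)
  · rintro _ ⟨m, hm, i, rfl⟩
    obtain ⟨x, rfl⟩ := Submodule.mem_span_singleton.mp hm
    rw [← range_rowMap]
    exact ⟨x i, rfl⟩
  · rintro _ ⟨i, rfl⟩
    exact ⟨![a, b], Submodule.mem_span_singleton_self _, i, rfl⟩

theorem isDistant_ptSub_iff {a b c d : Mₙ} (hab : Function.Injective (rowMap a b))
    (hcd : Function.Injective (rowMap c d)) :
    IsDistant Mₙ (ptSub Mₙ a b) (ptSub Mₙ c d) ↔ IsCompl (rowSpace a b) (rowSpace c d) := by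
  constructor
  · rw [isDistant_iff]
    rintro ⟨g, hp, hq⟩
    rw [ptSub_eq_ptSub_iff] at hp hq
    rw [← hp, ← hq]
    exact ((isUnit_iff_isCompl_rowSpace g.1).mp g.isUnit).2.2
  · intro h
    have hg := (isUnit_iff_isCompl_rowSpace (.of ![![a, b], ![c, d]])).mpr ⟨hab, hcd, h⟩
    exact isDistant_iff.mpr ⟨hg.unit, rfl, rfl⟩

theorem exists_ptSub_eq_of_mem_projLine {p : Submodule Mₙ (Fin 2 → Mₙ)} (hp : p ∈ projLine Mₙ) :
    ∃ a b : Mₙ, Function.Injective (rowMap a b) ∧ ptSub Mₙ a b = p := by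
  obtain ⟨g, rfl⟩ := mem_projLine_iff.mp hp
  exact ⟨_, _, ((isUnit_iff_isCompl_rowSpace g.1).mp g.isUnit).1, rfl⟩

theorem ptSub_mem_projLine {a b : Mₙ} (hab : Function.Injective (rowMap a b)) :
    ptSub Mₙ a b ∈ projLine Mₙ := by
  obtain ⟨W, hW⟩ := (rowSpace a b).exists_isCompl
  have hdim : Module.finrank F W = n := by
    have := Submodule.finrank_add_eq_of_isCompl hW
    rw [finrank_rowSpace hab, Module.finrank_prod, Module.finrank_fin_fun] at this
    omega
  obtain ⟨c, d, hcd, rfl⟩ := exists_rowSpace_eq hdim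
  exact ((isDistant_ptSub_iff hab hcd).mpr hW).mem_projLine_left

theorem bijOn_toRowSpace :
    Set.BijOn toRowSpace (projLine Mₙ) {W | Module.finrank F W = n} := by
  refine ⟨fun p hp => ?_, fun p hp q hq hpq => ?_, fun W hW => ?_⟩
  · obtain ⟨a, b, hab, rfl⟩ := exists_ptSub_eq_of_mem_projLine hp
    rw [Set.mem_ofPred_eq, toRowSpace_ptSub, finrank_rowSpace hab]
  · obtain ⟨a, b, -, rfl⟩ := exists_ptSub_eq_of_mem_projLine hp
    obtain ⟨c, d, -, rfl⟩ := exists_ptSub_eq_of_mem_projLine hq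
    rw [toRowSpace_ptSub, toRowSpace_ptSub] at hpq
    exact ptSub_eq_ptSub_iff.mpr hpq
  · obtain ⟨a, b, hab, rfl⟩ := exists_rowSpace_eq hW
    exact ⟨ptSub Mₙ a b, ptSub_mem_projLine hab, toRowSpace_ptSub a b⟩

theorem isDistant_iff_isCompl_toRowSpace {p q : Submodule Mₙ (Fin 2 → Mₙ)}
    (hp : p ∈ projLine Mₙ) (hq : q ∈ projLine Mₙ) :
    IsDistant Mₙ p q ↔ IsCompl (toRowSpace p) (toRowSpace q) := by
  obtain ⟨a, b, hab, rfl⟩ := exists_ptSub_eq_of_mem_projLine hp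
  obtain ⟨c, d, hcd, rfl⟩ := exists_ptSub_eq_of_mem_projLine hq
  rw [toRowSpace_ptSub, toRowSpace_ptSub]
  exact isDistant_ptSub_iff hab hcd

end

theorem projLine_matrix_equiv_grassmannian_general (F : Type*) [Field F] (n : ℕ) :
    ∃ e : {p : Submodule (Matrix (Fin n) (Fin n) F) (Fin 2 → Matrix (Fin n) (Fin n) F) //
            p ∈ projLine (Matrix (Fin n) (Fin n) F)} ≃
          {W : Submodule F ((Fin n → F) × (Fin n → F)) // Module.finrank F W = n},
      (∀ p q, IsDistant (Matrix (Fin n) (Fin n) F) p.1 q.1 ↔ IsCompl (e p).1 (e q).1) ∧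
      (∀ (A B : Matrix (Fin n) (Fin n) F)
          (h : ptSub (Matrix (Fin n) (Fin n) F) A B ∈ projLine (Matrix (Fin n) (Fin n) F)),
        (e ⟨ptSub (Matrix (Fin n) (Fin n) F) A B, h⟩).1 = rowSpace A B) :=
  ⟨bijOn_toRowSpace.equiv toRowSpace, fun p q => isDistant_iff_isCompl_toRowSpace p.2 q.2,
    fun A B _ => toRowSpace_ptSub A B⟩

/-- There is a bijection between `P(Mₙ(F_q))` and the Grassmannian of
`n`-dimensional subspaces of a `2n`-dimensional `F_q`-vector space, sending the point
generated by `(A,B)` to the row space of `[A|B]`, under which the distant relation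
corresponds to complementarity of subspaces. -/
theorem projLine_matrix_equiv_grassmannian (F : Type*) [Field F] [Fintype F] (n : ℕ) :
    ∃ e : {p : Submodule (Matrix (Fin n) (Fin n) F) (Fin 2 → Matrix (Fin n) (Fin n) F) //
            p ∈ projLine (Matrix (Fin n) (Fin n) F)} ≃
          {W : Submodule F ((Fin n → F) × (Fin n → F)) // Module.finrank F W = n},
      (∀ p q, IsDistant (Matrix (Fin n) (Fin n) F) p.1 q.1 ↔ IsCompl (e p).1 (e q).1) ∧
      (∀ (A B : Matrix (Fin n) (Fin n) F)
          (h : ptSub (Matrix (Fin n) (Fin n) F) A B ∈ projLine (Matrix (Fin n) (Fin n) F)),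
        (e ⟨ptSub (Matrix (Fin n) (Fin n) F) A B, h⟩).1 = rowSpace A B) :=
  projLine_matrix_equiv_grassmannian_general F n
end

section
/- If R is a finite local ring with Jacobson radical J, then the distant graph G(R,Δ) admits a partition of its vertex set into |J| pairwise vertex-disjoint maximal cliques, each of size |R/J| + 1. -/
open Matrix

set_option linter.unusedSectionVars false

section Aux

variable {R : Type*} [Ring R] [Fintype R] [Nontrivial R]

/-- In a finite ring, a one-sided inverse makes both factors units. -/
lemma units_of_mul_eq_one {a b : R} (h : a * b = 1) : IsUnit a ∧ IsUnit b := by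
  have hinj : Function.Injective (fun x : R => b * x) := by
    intro x y hxy
    have := congrArg (fun z => a * z) hxy
    simpa [← mul_assoc, h] using this
  obtain ⟨c, hc⟩ := Finite.surjective_of_injective hinj 1
  have hc' : b * c = 1 := hc
  have hac : a = c := by
    calc a = a * (b * c) := by rw [hc', mul_one]
    _ = (a * b) * c := (mul_assoc _ _ _).symm
    _ = c := by rw [h, one_mul]
  have hba : b * a = 1 := by rw [hac]; exact hc'
  exact ⟨⟨⟨a, b, h, hba⟩, rfl⟩, ⟨⟨b, a, hba, h⟩, rfl⟩⟩

lemma nu_mul_left {a : R} (b : R) (ha : ¬IsUnit a) : ¬IsUnit (a * b) := by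
  intro h
  obtain ⟨u, hu⟩ := h
  have : (a * b) * ↑u⁻¹ = 1 := by rw [← hu]; exact u.mul_inv
  rw [mul_assoc] at this
  exact ha (units_of_mul_eq_one this).1

lemma nu_mul_right (a : R) {b : R} (hb : ¬IsUnit b) : ¬IsUnit (a * b) := by
  intro h
  obtain ⟨u, hu⟩ := h
  have : ↑u⁻¹ * (a * b) = 1 := by rw [← hu]; exact u.inv_mul
  rw [← mul_assoc] at this
  exact hb (units_of_mul_eq_one this).2

lemma nu_neg {a : R} (ha : ¬IsUnit a) : ¬IsUnit (-a) := by
  intro h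
  exact ha (by simpa using h.neg)

variable (hloc : ∀ a : R, IsUnit a ∨ IsUnit (1 - a))

include hloc in
lemma nu_add {a b : R} (ha : ¬IsUnit a) (hb : ¬IsUnit b) : ¬IsUnit (a + b) := by
  intro h
  obtain ⟨u, hu⟩ := h
  have h1 : ¬IsUnit (a * ↑u⁻¹) := nu_mul_left _ ha
  have h2 : ¬IsUnit (b * ↑u⁻¹) := nu_mul_left _ hb
  rcases hloc (a * ↑u⁻¹) with h' | h'
  · exact h1 h'
  · apply h2
    have : b * ↑u⁻¹ = 1 - a * ↑u⁻¹ := by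
      have := u.mul_inv
      rw [hu] at this
      rw [eq_sub_iff_add_eq, ← add_mul, add_comm b a, this]
    rw [this]; exact h'

lemma smul_vec (r a b : R) : r • ![a, b] = ![r * a, r * b] := by
  funext i; fin_cases i <;> simp

lemma mem_sp {a b : R} {v : Fin 2 → R} :
    v ∈ Submodule.span R {![a, b]} ↔ ∃ r : R, ![r * a, r * b] = v := by
  constructor
  · intro h
    obtain ⟨r, hr⟩ := Submodule.mem_span_singleton.mp h
    exact ⟨r, by rw [← smul_vec]; exact hr⟩
  · rintro ⟨r, hr⟩
    exact Submodule.mem_span_singleton.mpr ⟨r, by rw [smul_vec]; exact hr⟩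

lemma vec_eq_iff {a b c d : R} : ![a, b] = ![c, d] ↔ a = c ∧ b = d := by
  constructor
  · intro h
    exact ⟨congrFun h 0, congrFun h 1⟩
  · rintro ⟨rfl, rfl⟩; rfl

lemma sp_one_eq {x x' : R} :
    Submodule.span R {![(1:R), x]} = Submodule.span R {![(1:R), x']} ↔ x = x' := by
  constructor
  · intro h
    have : ![(1:R), x'] ∈ Submodule.span R {![(1:R), x]} := by
      rw [h]; exact Submodule.mem_span_singleton_self _
    obtain ⟨r, hr⟩ := mem_sp.mp this
    obtain ⟨h1, h2⟩ := vec_eq_iff.mp hr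
    rw [mul_one] at h1
    rw [← h2, h1, one_mul]
  · intro h; rw [h]

lemma sp_inf_eq {y y' : R} :
    Submodule.span R {![y, (1:R)]} = Submodule.span R {![y', (1:R)]} ↔ y = y' := by
  constructor
  · intro h
    have : ![y', (1:R)] ∈ Submodule.span R {![y, (1:R)]} := by
      rw [h]; exact Submodule.mem_span_singleton_self _
    obtain ⟨r, hr⟩ := mem_sp.mp this
    obtain ⟨h1, h2⟩ := vec_eq_iff.mp hr
    rw [mul_one] at h2
    rw [← h1, h2, one_mul]
  · intro h; rw [h]

lemma sp_one_ne_inf {x y : R} (hy : ¬IsUnit y) :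
    Submodule.span R {![(1:R), x]} ≠ Submodule.span R {![y, (1:R)]} := by
  intro h
  have : ![(1:R), x] ∈ Submodule.span R {![y, (1:R)]} := by
    rw [← h]; exact Submodule.mem_span_singleton_self _
  obtain ⟨r, hr⟩ := mem_sp.mp this
  obtain ⟨h1, h2⟩ := vec_eq_iff.mp hr
  exact hy (units_of_mul_eq_one h1).2

lemma eq_sp_one {a b x : R} (h : Submodule.span R {![a, b]} = Submodule.span R {![(1:R), x]}) :
    ∃ r : R, IsUnit r ∧ a = r ∧ b = r * x := by
  have h1 : ![(1:R), x] ∈ Submodule.span R {![a, b]} := by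
    rw [h]; exact Submodule.mem_span_singleton_self _
  have h2 : ![a, b] ∈ Submodule.span R {![(1:R), x]} := by
    rw [← h]; exact Submodule.mem_span_singleton_self _
  obtain ⟨s, hs⟩ := mem_sp.mp h1
  obtain ⟨r, hr⟩ := mem_sp.mp h2
  obtain ⟨hs1, _⟩ := vec_eq_iff.mp hs
  obtain ⟨hr1, hr2⟩ := vec_eq_iff.mp hr
  rw [mul_one] at hr1
  have hsr : s * r = 1 := by rw [← hr1] at hs1; exact hs1
  exact ⟨r, (units_of_mul_eq_one hsr).2, hr1.symm, hr2.symm⟩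

lemma eq_sp_inf {a b y : R} (h : Submodule.span R {![a, b]} = Submodule.span R {![y, (1:R)]}) :
    ∃ r : R, IsUnit r ∧ a = r * y ∧ b = r := by
  have h1 : ![y, (1:R)] ∈ Submodule.span R {![a, b]} := by
    rw [h]; exact Submodule.mem_span_singleton_self _
  have h2 : ![a, b] ∈ Submodule.span R {![y, (1:R)]} := by
    rw [← h]; exact Submodule.mem_span_singleton_self _
  obtain ⟨s, hs⟩ := mem_sp.mp h1
  obtain ⟨r, hr⟩ := mem_sp.mp h2
  obtain ⟨_, hs2⟩ := vec_eq_iff.mp hs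
  obtain ⟨hr1, hr2⟩ := vec_eq_iff.mp hr
  rw [mul_one] at hr2
  have hsr : s * r = 1 := by rw [← hr2] at hs2; exact hs2
  exact ⟨r, (units_of_mul_eq_one hsr).2, hr1.symm, hr2.symm⟩

lemma sp_unit_smul {r a b : R} (hr : IsUnit r) :
    Submodule.span R {![r * a, r * b]} = Submodule.span R {![a, b]} := by
  obtain ⟨u, rfl⟩ := hr
  apply le_antisymm
  · rw [Submodule.span_le, Set.singleton_subset_iff]
    exact mem_sp.mpr ⟨u, rfl⟩
  · rw [Submodule.span_le, Set.singleton_subset_iff]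
    refine mem_sp.mpr ⟨↑u⁻¹, ?_⟩
    rw [vec_eq_iff]
    constructor <;> rw [← mul_assoc, u.inv_mul, one_mul]

lemma vecMul_two (a b : R) (M : Matrix (Fin 2) (Fin 2) R) :
    ![a, b] ᵥ* M = ![a * M 0 0 + b * M 1 0, a * M 0 1 + b * M 1 1] := by
  funext j
  fin_cases j <;> simp [vecMul, dotProduct, Fin.sum_univ_two]

lemma mulGL_ptSub (g : (Matrix (Fin 2) (Fin 2) R)ˣ) (a b : R) :
    mulGL R g (ptSub R a b) =
      Submodule.span R {![a * g.val 0 0 + b * g.val 1 0, a * g.val 0 1 + b * g.val 1 1]} := by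
  rw [mulGL, ptSub, Submodule.map_span, Set.image_singleton, Matrix.vecMulLinear_apply,
    vecMul_two]

def mkU (A B : Matrix (Fin 2) (Fin 2) R) (h1 : A * B = 1) (h2 : B * A = 1) :
    (Matrix (Fin 2) (Fin 2) R)ˣ := ⟨A, B, h1, h2⟩

/-- elementary upper unipotent -/
def eU (x : R) : (Matrix (Fin 2) (Fin 2) R)ˣ :=
  mkU !![1, x; 0, 1] !![1, -x; 0, 1]
    (by rw [Matrix.mul_fin_two, Matrix.one_fin_two]; congr 1 <;> simp)
    (by rw [Matrix.mul_fin_two, Matrix.one_fin_two]; congr 1 <;> simp)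

/-- elementary lower unipotent -/
def eL (y : R) : (Matrix (Fin 2) (Fin 2) R)ˣ :=
  mkU !![1, 0; y, 1] !![1, 0; -y, 1]
    (by rw [Matrix.mul_fin_two, Matrix.one_fin_two]; congr 1 <;> simp)
    (by rw [Matrix.mul_fin_two, Matrix.one_fin_two]; congr 1 <;> simp)

/-- swap -/
def eW : (Matrix (Fin 2) (Fin 2) R)ˣ :=
  mkU !![0, 1; 1, 0] !![0, 1; 1, 0]
    (by rw [Matrix.mul_fin_two, Matrix.one_fin_two]; congr 1 <;> simp)
    (by rw [Matrix.mul_fin_two, Matrix.one_fin_two]; congr 1 <;> simp)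

/-- diagonal -/
def eD (u v : Rˣ) : (Matrix (Fin 2) (Fin 2) R)ˣ :=
  mkU !![(u:R), 0; 0, (v:R)] !![((u⁻¹:Rˣ):R), 0; 0, ((v⁻¹:Rˣ):R)]
    (by rw [Matrix.mul_fin_two, Matrix.one_fin_two]; congr 1 <;> simp)
    (by rw [Matrix.mul_fin_two, Matrix.one_fin_two]; congr 1 <;> simp)

lemma projLine_one (x : R) : Submodule.span R {![(1:R), x]} ∈ projLine R := by
  refine ⟨eU x, ?_⟩
  rw [mulGL_ptSub]
  congr 1
  simp [eU, mkU]

lemma projLine_inf (y : R) : Submodule.span R {![y, (1:R)]} ∈ projLine R := by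
  refine ⟨eU y * eW, ?_⟩
  rw [mulGL_ptSub]
  congr 1
  have : (eU y * eW).val = !![y, 1; 1, 0] := by
    show (!![1, y; 0, 1] : Matrix (Fin 2) (Fin 2) R) * !![0, 1; 1, 0] = _
    rw [Matrix.mul_fin_two]
    congr 1 <;> simp
  rw [this]
  simp

lemma distant_symm {p q : Submodule R (Fin 2 → R)} (h : IsDistant R p q) : IsDistant R q p := by
  obtain ⟨g, h1, h2⟩ := h
  refine ⟨eW * g, ?_, ?_⟩
  · rw [← h2, mulGL_ptSub, mulGL_ptSub]
    congr 1
    have : (eW * g).val = !![0,1;1,0] * g.val := rfl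
    rw [this]
    simp [Matrix.mul_apply, Fin.sum_univ_two]
  · rw [← h1, mulGL_ptSub, mulGL_ptSub]
    congr 1
    have : (eW * g).val = !![0,1;1,0] * g.val := rfl
    rw [this]
    simp [Matrix.mul_apply, Fin.sum_univ_two]

lemma distant_one_one {x x' : R} (h : IsUnit (x' - x)) :
    IsDistant R (Submodule.span R {![(1:R), x]}) (Submodule.span R {![(1:R), x']}) := by
  obtain ⟨u, hu⟩ := h
  refine ⟨eL 1 * eD 1 u * eU x, ?_, ?_⟩ <;> rw [mulGL_ptSub] <;> congr 1
  all_goals {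
    have hval : (eL 1 * eD 1 u * eU x).val = !![1, x; 1, x + ↑u] := by
      show (!![1,0;1,1] : Matrix (Fin 2) (Fin 2) R) * !![(1:R),0;0,↑u] * !![1,x;0,1] = _
      rw [Matrix.mul_fin_two, Matrix.mul_fin_two]
      congr 1 <;> simp
    rw [hval]
    have hx' : x + (u : R) = x' := by rw [hu]; abel
    simp [hx']
  }

include hloc in
lemma distant_one_inf (x : R) {y : R} (hy : ¬IsUnit y) :
    IsDistant R (Submodule.span R {![(1:R), x]}) (Submodule.span R {![y, (1:R)]}) := by
  have hyx : ¬IsUnit (y * x) := nu_mul_left x hy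
  rcases hloc (y * x) with h' | h'
  · exact absurd h' hyx
  obtain ⟨w, hw⟩ := h'
  refine ⟨eL y * eD 1 w * eU x, ?_, ?_⟩ <;> rw [mulGL_ptSub] <;> congr 1
  all_goals {
    have hval : (eL y * eD 1 w * eU x).val = !![1, x; y, y * x + ↑w] := by
      show (!![1,0;y,1] : Matrix (Fin 2) (Fin 2) R) * !![(1:R),0;0,↑w] * !![1,x;0,1] = _
      rw [Matrix.mul_fin_two, Matrix.mul_fin_two]
      congr 1 <;> simp
    rw [hval]
    have h1 : y * x + (w : R) = 1 := by rw [hw]; abel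
    simp [h1]
  }

include hloc in
lemma projLine_cases {p : Submodule R (Fin 2 → R)} (hp : p ∈ projLine R) :
    (∃ x : R, p = Submodule.span R {![(1:R), x]}) ∨
      (∃ y : R, ¬IsUnit y ∧ p = Submodule.span R {![y, (1:R)]}) := by
  obtain ⟨g, hg⟩ := hp
  rw [mulGL_ptSub] at hg
  have hg' : Submodule.span R {![g.val 0 0, g.val 0 1]} = p := by
    rw [← hg]; congr 1; simp
  by_cases h00 : IsUnit (g.val 0 0)
  · obtain ⟨r, hr⟩ := h00
    left
    refine ⟨↑r⁻¹ * g.val 0 1, ?_⟩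
    rw [← hg']
    have : (![g.val 0 0, g.val 0 1] : Fin 2 → R) = ![(r:R) * 1, (r:R) * (↑r⁻¹ * g.val 0 1)] := by
      rw [vec_eq_iff]
      constructor
      · rw [mul_one, hr]
      · rw [← mul_assoc, r.mul_inv, one_mul]
    rw [this, sp_unit_smul r.isUnit]
  · by_cases h01 : IsUnit (g.val 0 1)
    · obtain ⟨u, hu⟩ := h01
      right
      refine ⟨↑u⁻¹ * g.val 0 0, nu_mul_right _ h00, ?_⟩
      rw [← hg']
      have : (![g.val 0 0, g.val 0 1] : Fin 2 → R) = ![↑u * (↑u⁻¹ * g.val 0 0), ↑u * 1] := by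
        rw [vec_eq_iff]
        constructor
        · rw [← mul_assoc, u.mul_inv, one_mul]
        · rw [mul_one, hu]
      rw [this, sp_unit_smul u.isUnit]
    · exfalso
      have h1 : g.val 0 0 * g.inv 0 0 + g.val 0 1 * g.inv 1 0 = 1 := by
        have e : (g.val * g.inv) 0 0 = (1 : Matrix (Fin 2) (Fin 2) R) 0 0 := by
          rw [g.val_inv]
        rw [Matrix.mul_apply, Fin.sum_univ_two, Matrix.one_apply_eq] at e
        exact e
      have := nu_add hloc (nu_mul_left (g.inv 0 0) h00) (nu_mul_left (g.inv 1 0) h01)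
      rw [h1] at this
      exact this isUnit_one

include hloc in
lemma not_distant_one_one {x x' : R} (h : ¬IsUnit (x' - x)) :
    ¬IsDistant R (Submodule.span R {![(1:R), x]}) (Submodule.span R {![(1:R), x']}) := by
  rintro ⟨g, h1, h2⟩
  rw [mulGL_ptSub] at h1 h2
  have h1' : Submodule.span R {![g.val 0 0, g.val 0 1]} = Submodule.span R {![(1:R), x]} := by
    rw [← h1]; congr 1; simp
  have h2' : Submodule.span R {![g.val 1 0, g.val 1 1]} = Submodule.span R {![(1:R), x']} := by
    rw [← h2]; congr 1; simp
  obtain ⟨r, hr, hr0, hr1⟩ := eq_sp_one h1'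
  obtain ⟨t, ht, ht0, ht1⟩ := eq_sp_one h2'
  obtain ⟨ru, hru⟩ := hr
  obtain ⟨tu, htu⟩ := ht
  have hMval : (eL (-1) * eD ru⁻¹ tu⁻¹ * g).val = !![1, x; 0, x' - x] := by
    have hgval : g.val = !![(ru:R), ↑ru * x; ↑tu, ↑tu * x'] := by
      rw [Matrix.eta_fin_two g.val]
      rw [hr0, hr1, ht0, ht1, hru, htu]
    have heq : (eL (-1) * eD ru⁻¹ tu⁻¹ * g).val
        = !![1,0;-1,1] * (!![((ru⁻¹:Rˣ):R), 0; 0, ((tu⁻¹:Rˣ):R)] * g.val) := by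
      show (!![1,0;-1,1] : Matrix (Fin 2) (Fin 2) R) * !![((ru⁻¹:Rˣ):R), 0; 0, ((tu⁻¹:Rˣ):R)] * g.val = _
      rw [Matrix.mul_assoc]
    rw [heq, hgval, Matrix.mul_fin_two, Matrix.mul_fin_two]
    congr 1 <;> simp [← mul_assoc] <;> abel
  obtain ⟨W, hW⟩ : IsUnit (!![1, x; 0, x' - x] : Matrix (Fin 2) (Fin 2) R) :=
    ⟨eL (-1) * eD ru⁻¹ tu⁻¹ * g, hMval⟩
  have hBM : W.inv * !![1, x; 0, x' - x] = 1 := by rw [← hW]; exact W.inv_val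
  have e10 : W.inv 1 0 = 0 := by
    have e : (W.inv * !![1, x; 0, x' - x]) 1 0 = (1 : Matrix (Fin 2) (Fin 2) R) 1 0 := by rw [hBM]
    rw [Matrix.mul_apply, Fin.sum_univ_two, Matrix.one_apply_ne (by decide)] at e
    simp only [Matrix.cons_val', Matrix.cons_val_zero, Matrix.cons_val_one, Matrix.head_cons,
      Matrix.empty_val', Matrix.cons_val_fin_one, Matrix.head_fin_const, Matrix.of_apply,
      mul_one, mul_zero, add_zero, zero_add] at e
    exact e
  have e11 : W.inv 1 0 * x + W.inv 1 1 * (x' - x) = 1 := by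
    have e : (W.inv * !![1, x; 0, x' - x]) 1 1 = (1 : Matrix (Fin 2) (Fin 2) R) 1 1 := by rw [hBM]
    rw [Matrix.mul_apply, Fin.sum_univ_two, Matrix.one_apply_eq] at e
    simp only [Matrix.cons_val', Matrix.cons_val_zero, Matrix.cons_val_one, Matrix.head_cons,
      Matrix.empty_val', Matrix.cons_val_fin_one, Matrix.head_fin_const, Matrix.of_apply,
      mul_one, mul_zero, add_zero, zero_add] at e
    exact e
  rw [e10, zero_mul, zero_add] at e11
  exact h (units_of_mul_eq_one e11).2

include hloc in
lemma not_distant_inf_inf {y y' : R} (hy : ¬IsUnit y) (hy' : ¬IsUnit y') :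
    ¬IsDistant R (Submodule.span R {![y, (1:R)]}) (Submodule.span R {![y', (1:R)]}) := by
  rintro ⟨g, h1, h2⟩
  rw [mulGL_ptSub] at h1 h2
  have h1' : Submodule.span R {![g.val 0 0, g.val 0 1]} = Submodule.span R {![y, (1:R)]} := by
    rw [← h1]; congr 1; simp
  have h2' : Submodule.span R {![g.val 1 0, g.val 1 1]} = Submodule.span R {![y', (1:R)]} := by
    rw [← h2]; congr 1; simp
  obtain ⟨r, hr, hr0, hr1⟩ := eq_sp_inf h1'
  obtain ⟨t, ht, ht0, ht1⟩ := eq_sp_inf h2'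
  obtain ⟨ru, hru⟩ := hr
  obtain ⟨tu, htu⟩ := ht
  have hMval : (eD ru⁻¹ tu⁻¹ * g).val = !![y, 1; y', 1] := by
    have hgval : g.val = !![↑ru * y, (ru:R); ↑tu * y', ↑tu] := by
      rw [Matrix.eta_fin_two g.val]
      rw [hr0, hr1, ht0, ht1, hru, htu]
    have heq : (eD ru⁻¹ tu⁻¹ * g).val = !![((ru⁻¹:Rˣ):R), 0; 0, ((tu⁻¹:Rˣ):R)] * g.val := rfl
    rw [heq, hgval, Matrix.mul_fin_two]
    congr 1 <;> simp [← mul_assoc]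
  obtain ⟨W, hW⟩ : IsUnit (!![y, 1; y', 1] : Matrix (Fin 2) (Fin 2) R) :=
    ⟨eD ru⁻¹ tu⁻¹ * g, hMval⟩
  have hBM : W.inv * !![y, 1; y', 1] = 1 := by rw [← hW]; exact W.inv_val
  have e00 : W.inv 0 0 * y + W.inv 0 1 * y' = 1 := by
    have e : (W.inv * !![y, 1; y', 1]) 0 0 = (1 : Matrix (Fin 2) (Fin 2) R) 0 0 := by rw [hBM]
    rw [Matrix.mul_apply, Fin.sum_univ_two, Matrix.one_apply_eq] at e
    simp only [Matrix.cons_val', Matrix.cons_val_zero, Matrix.cons_val_one, Matrix.head_cons,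
      Matrix.empty_val', Matrix.cons_val_fin_one, Matrix.head_fin_const, Matrix.of_apply,
      mul_one, mul_zero, add_zero, zero_add] at e
    exact e
  have := nu_add hloc (nu_mul_right (W.inv 0 0) hy) (nu_mul_right (W.inv 0 1) hy')
  rw [e00] at this
  exact this isUnit_one

end Aux

/-- For a finite local ring `R` with Jacobson radical `J` (the set of
non-units), the distant graph admits a partition into `|J|` pairwise vertex-disjoint
maximal cliques, each of size `|R/J| + 1`. -/
theorem local_distant_graph_clique_partition {R : Type*} [Ring R] [Fintype R]
    [Nontrivial R] (hloc : ∀ a : R, IsUnit a ∨ IsUnit (1 - a)) :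
    ∃ f : {p : Submodule R (Fin 2 → R) // p ∈ projLine R} →
        Fin (Nat.card {a : R // ¬IsUnit a}),
      ∀ c,
        (∀ p q, f p = c → f q = c → p ≠ q → IsDistant R p.1 q.1) ∧
        Nat.card {p // f p = c} = Fintype.card R / Nat.card {a : R // ¬IsUnit a} + 1 ∧
        (∀ p, f p ≠ c → ∃ q, f q = c ∧ ¬IsDistant R p.1 q.1) := by
  classical
  let J : AddSubgroup R :=
    { carrier := {a : R | ¬IsUnit a}
      zero_mem' := by simpa using (not_isUnit_zero : ¬IsUnit (0:R))
      add_mem' := fun {a b} ha hb => nu_add hloc ha hb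
      neg_mem' := fun {a} ha => nu_neg ha }
  let s : R ⧸ J → R := Quotient.out
  have hs : ∀ q : R ⧸ J, (QuotientAddGroup.mk (s q) : R ⧸ J) = q := fun q =>
    QuotientAddGroup.out_eq' q
  have hsub : ∀ x : R, ¬IsUnit (x - s (QuotientAddGroup.mk x)) := fun x =>
    (QuotientAddGroup.eq_iff_sub_mem.mp (hs (QuotientAddGroup.mk x)).symm :
      x - s (QuotientAddGroup.mk x) ∈ J)
  let ι : {a : R // ¬IsUnit a} ≃ Fin (Nat.card {a : R // ¬IsUnit a}) :=
    (Fintype.equivFin _).trans (finCongr Nat.card_eq_fintype_card.symm)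
  have hchoice : ∀ p : {p : Submodule R (Fin 2 → R) // p ∈ projLine R},
      ∃ j : {a : R // ¬IsUnit a},
        (∃ x : R, p.1 = Submodule.span R {![(1:R), x]} ∧
          (j : R) = x - s (QuotientAddGroup.mk x)) ∨
        p.1 = Submodule.span R {![(j : R), (1:R)]} := by
    intro p
    rcases projLine_cases hloc p.2 with ⟨x, hx⟩ | ⟨y, hy, hyp⟩
    · exact ⟨⟨x - s (QuotientAddGroup.mk x), hsub x⟩, Or.inl ⟨x, hx, rfl⟩⟩
    · exact ⟨⟨y, hy⟩, Or.inr hyp⟩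
  choose E hE using hchoice
  have hE1 : ∀ p (x : R), p.1 = Submodule.span R {![(1:R), x]} →
      (E p : R) = x - s (QuotientAddGroup.mk x) := by
    intro p x hx
    rcases hE p with ⟨x', hx', hEx'⟩ | hinf
    · have hxx : x' = x := sp_one_eq.mp (hx'.symm.trans hx)
      rw [hEx', hxx]
    · exact absurd (hx.symm.trans hinf) (sp_one_ne_inf (E p).2)
  have hE2 : ∀ p (y : R), ¬IsUnit y → p.1 = Submodule.span R {![y, (1:R)]} →
      (E p : R) = y := by
    intro p y hy hyp
    rcases hE p with ⟨x', hx', _⟩ | hinf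
    · exact absurd (hx'.symm.trans hyp) (sp_one_ne_inf hy)
    · exact sp_inf_eq.mp (hinf.symm.trans hyp)
  refine ⟨fun p => ι (E p), fun c => ?_⟩
  set jc : {a : R // ¬IsUnit a} := ι.symm c with hjc
  let Pa : R ⧸ J → {p : Submodule R (Fin 2 → R) // p ∈ projLine R} := fun q =>
    ⟨_, projLine_one (s q + (jc : R))⟩
  let Pi : {p : Submodule R (Fin 2 → R) // p ∈ projLine R} := ⟨_, projLine_inf (jc : R)⟩
  have hfPa : ∀ q : R ⧸ J, ι (E (Pa q)) = c := by
    intro q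
    have h1 : (E (Pa q) : R) = (s q + (jc : R)) -
        s (QuotientAddGroup.mk (s q + (jc : R))) := hE1 _ _ rfl
    have h2 : (QuotientAddGroup.mk (s q + (jc : R)) : R ⧸ J) = QuotientAddGroup.mk (s q) := by
      rw [QuotientAddGroup.eq_iff_sub_mem]
      have : s q + (jc : R) - s q = (jc : R) := by abel
      rw [this]
      exact jc.2
    rw [h2, hs] at h1
    have h3 : (E (Pa q) : R) = (jc : R) := by rw [h1]; abel
    have h4 : E (Pa q) = jc := Subtype.ext h3
    rw [h4, hjc]
    exact ι.apply_symm_apply c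
  have hfPi : ι (E Pi) = c := by
    have h3 : (E Pi : R) = (jc : R) := hE2 _ _ jc.2 rfl
    have h4 : E Pi = jc := Subtype.ext h3
    rw [h4, hjc]
    exact ι.apply_symm_apply c
  refine ⟨?_, ?_, ?_⟩
  · -- pairwise distant
    intro p q hp hq hpq
    have hEpq : E p = E q := ι.injective (hp.trans hq.symm)
    rcases hE p with ⟨x, hx, hEx⟩ | hip
    · rcases hE q with ⟨x', hx', hEx'⟩ | hiq
      · have hxx : x ≠ x' := by
          intro hcon
          exact hpq (Subtype.ext (by rw [hx, hx', hcon]))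
        have hu : IsUnit (x' - x) := by
          by_contra hnu
          have hmk : (QuotientAddGroup.mk x' : R ⧸ J) = QuotientAddGroup.mk x :=
            QuotientAddGroup.eq_iff_sub_mem.mpr (show x' - x ∈ J from hnu)
          have heq : x - s (QuotientAddGroup.mk x) = x' - s (QuotientAddGroup.mk x') := by
            rw [← hEx, ← hEx', hEpq]
          rw [hmk] at heq
          exact hxx (by
            have := sub_left_inj.mp heq.symm
            exact this.symm)
        rw [hx, hx']
        exact distant_one_one hu
      · rw [hx, hiq]
        exact distant_one_inf hloc x (E q).2
    · rcases hE q with ⟨x', hx', hEx'⟩ | hiq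
      · rw [hip, hx']
        exact distant_symm (distant_one_inf hloc x' (E p).2)
      · exact absurd (Subtype.ext (by rw [hip, hiq, hEpq])) hpq
  · -- cardinality
    let F : Option (R ⧸ J) → {p // ι (E p) = c} := fun o =>
      match o with
      | none => ⟨Pi, hfPi⟩
      | some q => ⟨Pa q, hfPa q⟩
    have hFinj : Function.Injective F := by
      intro o o' h
      match o, o' with
      | none, none => rfl
      | none, some q =>
        exfalso
        have h1 : Pi.1 = (Pa q).1 := by
          have := congrArg (fun z => z.1.1) h
          exact this
        exact sp_one_ne_inf jc.2 h1.symm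
      | some q, none =>
        exfalso
        have h1 : (Pa q).1 = Pi.1 := by
          have := congrArg (fun z => z.1.1) h
          exact this
        exact sp_one_ne_inf jc.2 h1
      | some q, some q' =>
        have h1 : (Pa q).1 = (Pa q').1 := by
          have := congrArg (fun z => z.1.1) h
          exact this
        have h2 : s q + (jc : R) = s q' + (jc : R) := sp_one_eq.mp h1
        have h3 : s q = s q' := add_right_cancel h2
        have h4 : q = q' := by rw [← hs q, ← hs q', h3]
        rw [h4]
    have hFsurj : Function.Surjective F := by
      rintro ⟨p, hpc⟩
      have hEp : E p = jc := by
        rw [hjc, ← hpc]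
        exact (ι.symm_apply_apply _).symm
      rcases hE p with ⟨x, hx, hEx⟩ | hip
      · refine ⟨some (QuotientAddGroup.mk x), ?_⟩
        apply Subtype.ext
        apply Subtype.ext
        show Submodule.span R {![(1:R), s (QuotientAddGroup.mk x) + (jc : R)]} = p.1
        have hval : (jc : R) = x - s (QuotientAddGroup.mk x) := by rw [← hEp]; exact hEx
        have : s (QuotientAddGroup.mk x) + (jc : R) = x := by rw [hval]; abel
        rw [this, ← hx]
      · refine ⟨none, ?_⟩
        apply Subtype.ext
        apply Subtype.ext
        show Submodule.span R {![(jc : R), (1:R)]} = p.1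
        rw [hip, ← hEp]
    have hcard1 : Nat.card {p // ι (E p) = c} = Nat.card (Option (R ⧸ J)) :=
      (Nat.card_congr (Equiv.ofBijective F ⟨hFinj, hFsurj⟩)).symm
    have hcard2 : Nat.card (Option (R ⧸ J)) = Nat.card (R ⧸ J) + 1 := Finite.card_option
    have hJcard : Nat.card J = Nat.card {a : R // ¬IsUnit a} :=
      Nat.card_congr (Equiv.subtypeEquivRight fun a => Iff.rfl)
    have hcard3 : Nat.card R = Nat.card (R ⧸ J) * Nat.card {a : R // ¬IsUnit a} := by
      rw [← hJcard]
      exact AddSubgroup.card_eq_card_quotient_mul_card_addSubgroup J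
    have hJpos : 0 < Nat.card {a : R // ¬IsUnit a} := by
      have : Nonempty {a : R // ¬IsUnit a} := ⟨⟨0, not_isUnit_zero⟩⟩
      exact Nat.card_pos
    have hdiv : Fintype.card R / Nat.card {a : R // ¬IsUnit a} = Nat.card (R ⧸ J) := by
      rw [← Nat.card_eq_fintype_card, hcard3]
      exact Nat.mul_div_cancel _ hJpos
    rw [hcard1, hcard2, hdiv]
  · -- maximality
    intro p hp
    rcases hE p with ⟨x, hx, hEx⟩ | hip
    · refine ⟨Pa (QuotientAddGroup.mk x), hfPa _, ?_⟩
      rw [hx]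
      apply not_distant_one_one hloc
      have h1 : ¬IsUnit (s (QuotientAddGroup.mk x) - x) := by
        have h2 := nu_neg (hsub x)
        rw [neg_sub] at h2
        exact h2
      have h3 := nu_add hloc h1 jc.2
      have heq : s (QuotientAddGroup.mk x) + (jc : R) - x
          = (s (QuotientAddGroup.mk x) - x) + (jc : R) := by abel
      rw [heq]
      exact h3
    · refine ⟨Pi, hfPi, ?_⟩
      rw [hip]
      exact not_distant_inf_inf hloc (E p).2 jc.2
end
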